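/- arXiv:2506.23950 — 3 statements merged into one kernel-verified Lean document; each statement's English description precedes it below -/
import Mathlib

section
/- Let f ∈ S = ℂ[x_0,...,x_n] be a reduced homogeneous polynomial of degree d, let ρ_1,...,ρ_{n-1} ∈ S^{n+1} be Jacobian syzygies of f (i.e. each ρ_i = (a_0,...,a_n) satisfies Σ_j a_j f_j = 0 where f_j = ∂f/∂x_j), and let ρ ∈ S^{n+1} be any further Jacobian syzygy of f. Form the (n+1)×(n+1) matrix M whose first row is (x_0,...,x_n), whose rows 2,...,n are ρ_1,...,ρ_{n-1}, and whose last row is ρ. Then f divides det M in S. -/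
/-!
Euler's formula and the syzygy rows give `M · ∇f = (d f, 0, …, 0)`, so by Cramer's rule `f`
divides `det M · ∂f/∂x_j` for every `j`. If a prime factor `p` of the squarefree `f` did not
divide `det M`, it would divide every `∂f/∂x_j`, hence (as `p² ∤ f`) every `∂p/∂x_j`; comparing
degrees forces all `∂p/∂x_j` to vanish, so `p` would be a constant, which is absurd.
-/

open MvPolynomial

noncomputable section

/-- `ρ` is a Jacobian syzygy of `f`: `∑ j, ρ j * ∂f/∂x_j = 0`. -/
def IsJacobianSyzygy (n : ℕ) (f : MvPolynomial (Fin (n + 1)) ℂ)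
    (ρ : Fin (n + 1) → MvPolynomial (Fin (n + 1)) ℂ) : Prop :=
  ∑ j, ρ j * pderiv j f = 0

theorem Squarefree.dvd_of_forall_prime_dvd {α : Type*} [CommMonoidWithZero α]
    [UniqueFactorizationMonoid α] {a b : α} (ha : Squarefree a)
    (h : ∀ p, Prime p → p ∣ a → p ∣ b) : a ∣ b := by
  induction a using UniqueFactorizationMonoid.induction_on_prime with
  | h₁ => exact (ha 0 (mul_zero 0).dvd).dvd
  | h₂ u hu => exact hu.dvd
  | h₃ c p _ hp ih =>
    obtain ⟨t, rfl⟩ := ih ha.of_mul_right fun q hq hqc => h q hq (hqc.mul_left p)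
    have hpc : ¬ p ∣ c := fun hpc => hp.not_isUnit (ha p (mul_dvd_mul_left p hpc))
    have hpt : p ∣ t := (hp.dvd_mul.mp (h p hp (dvd_mul_right p c))).resolve_left hpc
    rw [mul_comm p c]
    exact mul_dvd_mul_left c hpt

theorem Prime.dvd_derivation_of_dvd_of_squarefree {R A : Type*} [CommSemiring R] [CommRing A]
    [Algebra R A] (D : Derivation R A A) {f p : A} (hf : Squarefree f) (hp : Prime p)
    (hpf : p ∣ f) (hpDf : p ∣ D f) : p ∣ D p := by
  obtain ⟨g, rfl⟩ := hpf
  have hpg : ¬ p ∣ g := fun hpg => hp.not_isUnit (hf p (mul_dvd_mul_left p hpg))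
  rw [D.leibniz, smul_eq_mul, smul_eq_mul, dvd_add_right (dvd_mul_right p _)] at hpDf
  exact (hp.dvd_mul.mp hpDf).resolve_left hpg

namespace MvPolynomial

variable {σ R : Type*}

theorem totalDegree_pderiv_lt [CommSemiring R] {p : MvPolynomial σ R} {i : σ}
    (h : pderiv i p ≠ 0) : (pderiv i p).totalDegree < p.totalDegree := by
  obtain ⟨m, hm, hdeg⟩ := Finset.exists_mem_eq_sup _ (support_nonempty.mpr h)
    fun m => m.sum fun _ e => e
  have hm' : m + Finsupp.single i 1 ∈ p.support := by
    rw [MvPolynomial.mem_support_iff, coeff_pderiv] at hm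
    exact MvPolynomial.mem_support_iff.mpr (left_ne_zero_of_mul hm)
  have := le_totalDegree hm'
  rw [Finsupp.sum_add_index' (fun _ => rfl) (fun _ _ _ => rfl), Finsupp.sum_single_index rfl]
    at this
  rw [totalDegree, hdeg]
  omega

theorem pderiv_eq_zero_of_dvd_pderiv [CommRing R] [IsDomain R] {p : MvPolynomial σ R} {i : σ}
    (h : p ∣ pderiv i p) : pderiv i p = 0 := by
  by_contra hne
  exact (totalDegree_le_of_dvd_of_isDomain h hne).not_gt (totalDegree_pderiv_lt hne)

theorem eq_C_of_forall_pderiv_eq_zero [CommSemiring R] [NoZeroDivisors R] [CharZero R]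
    {p : MvPolynomial σ R} (h : ∀ i, pderiv i p = 0) : p = C (coeff 0 p) := by
  classical
  ext m
  rw [coeff_C]
  split_ifs with hm
  · rw [hm]
  obtain ⟨i, hi⟩ : ∃ i, m i ≠ 0 := by
    by_contra! h0
    exact hm (Finsupp.ext h0).symm
  obtain ⟨m', rfl⟩ : ∃ m', m = m' + Finsupp.single i 1 :=
    ⟨m - Finsupp.single i 1, (tsub_add_cancel_of_le (by simpa [Nat.one_le_iff_ne_zero])).symm⟩
  have := coeff_pderiv (i := i) p m'
  rw [h i, coeff_zero, eq_comm, mul_eq_zero] at this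
  exact this.resolve_right (Nat.cast_add_one_ne_zero _)

theorem _root_.Prime.exists_not_dvd_pderiv {K : Type*} [Field K] [CharZero K] {p : MvPolynomial σ K}
    (hp : Prime p) : ∃ i, ¬ p ∣ pderiv i p := by
  by_contra! h
  have hpC := eq_C_of_forall_pderiv_eq_zero fun i => pderiv_eq_zero_of_dvd_pderiv (h i)
  have hc : coeff 0 p ≠ 0 := fun hc => hp.ne_zero (by rw [hpC, hc, C_0])
  exact hp.not_isUnit (hpC ▸ (isUnit_iff_ne_zero.mpr hc).map C)

theorem dvd_of_squarefree_of_forall_dvd_mul_pderiv {K : Type*} [Field K] [CharZero K]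
    {f D : MvPolynomial σ K} (hf : Squarefree f) (h : ∀ i, f ∣ D * pderiv i f) : f ∣ D := by
  refine hf.dvd_of_forall_prime_dvd fun p hp hpf => ?_
  by_contra hpD
  obtain ⟨i, hi⟩ := hp.exists_not_dvd_pderiv
  have hpfi : p ∣ pderiv i f := (hp.dvd_mul.mp (hpf.trans (h i))).resolve_left hpD
  exact hi (hp.dvd_derivation_of_dvd_of_squarefree (pderiv i) hf hpf hpfi)

end MvPolynomial

open Matrix in
theorem Matrix.dvd_det_mul_of_mulVec_eq_single {n α : Type*} [Fintype n] [DecidableEq n]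
    [CommRing α] {A : Matrix n n α} {v : n → α} {i : n} {c : α}
    (h : A *ᵥ v = Pi.single i c) (j : n) : c ∣ A.det * v j := by
  have hv : A.det • v = A.adjugate *ᵥ Pi.single i c := by
    rw [← h, mulVec_mulVec, adjugate_mul, smul_mulVec, one_mulVec]
  have := congrFun hv j
  rw [Pi.smul_apply, smul_eq_mul, mulVec, dotProduct_single] at this
  exact Dvd.intro_left _ this.symm

theorem stmt_0_general (n d : ℕ)
    (f : MvPolynomial (Fin (n + 1)) ℂ)
    (hf : f.IsHomogeneous d) (hred : Squarefree f)
    (M : Matrix (Fin (n + 1)) (Fin (n + 1)) (MvPolynomial (Fin (n + 1)) ℂ))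
    (hrow0 : ∀ j, M 0 j = X j)
    (hsyz : ∀ i : Fin (n + 1), i ≠ 0 → IsJacobianSyzygy n f (M i)) :
    f ∣ M.det := by
  have hgrad : M.mulVec (fun j => pderiv j f) = Pi.single 0 (d • f) := by
    funext i
    rcases eq_or_ne i 0 with rfl | hi
    · simpa [Matrix.mulVec, dotProduct, hrow0] using hf.sum_X_mul_pderiv
    · simpa [Matrix.mulVec, dotProduct, hi, IsJacobianSyzygy] using hsyz i hi
  refine dvd_of_squarefree_of_forall_dvd_mul_pderiv hred fun j => ?_
  exact (Dvd.intro_left _ (nsmul_eq_mul d f).symm).trans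
    (Matrix.dvd_det_mul_of_mulVec_eq_single hgrad j)

/-- If the first row of a square matrix `M` is `(x_0,...,x_n)` and all the other
rows are Jacobian syzygies of a reduced homogeneous polynomial `f` of degree `d ≥ 3`,
then `f` divides `det M`. -/
theorem stmt_0 (n d : ℕ) (hn : 3 ≤ n + 1)
    (f : MvPolynomial (Fin (n + 1)) ℂ) (hd : 3 ≤ d)
    (hf : f.IsHomogeneous d) (hred : Squarefree f)
    (M : Matrix (Fin (n + 1)) (Fin (n + 1)) (MvPolynomial (Fin (n + 1)) ℂ))
    (hrow0 : ∀ j, M 0 j = X j)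
    (hsyz : ∀ i : Fin (n + 1), i ≠ 0 → IsJacobianSyzygy n f (M i)) :
    f ∣ M.det :=
  stmt_0_general n d f hf hred M hrow0 hsyz
end
end

section
/- Let V: f = 0 be a strictly POG hypersurface in ℙ^n with exponents (d_1,...,d_{n+1}), so that D_0(f) has minimal graded resolution 0 → S(−d_{n+1}−1) → ⊕_{j=1}^{n+1} S(−d_j) → D_0(f) → 0, and suppose the singular subscheme Σ has dimension n−2. Then deg Σ = Σ_{j=1}^n d_j^2 + Σ_{1≤i<j≤n} d_i d_j − Σ_{j=1}^{n+1} d_j. -/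
/-!
With `e = d_{n+1}`, the degree-`m` piece of the minimal resolution
`0 → S(-(d-1)-e-1) → ⊕ᵢ S(-(d-1)-dᵢ) → S(-(d-1))^{n+1} → S → M(f) → 0` is an exact sequence
of finite-dimensional vector spaces, so for large `m` the Hilbert function of `M(f)` is an explicit
alternating sum of binomial coefficients `C(m - a + n, n)`. Applying the forward difference
operator `n - 2` times turns the Hilbert polynomial into `(n-2)!` times its leading coefficient
and each binomial coefficient into `C(m - a + n, 2)`; applying it once more gives `0`. Comparing
the two sides yields `∑ dᵢ = d + e` and `deg Σ = ½ ∑ ± a²`, which is the stated formula.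
-/

open MvPolynomial

noncomputable section

def jacobianIdeal (n : ℕ) (f : MvPolynomial (Fin (n + 1)) ℂ) :
    Ideal (MvPolynomial (Fin (n + 1)) ℂ) :=
  Ideal.span (Set.range fun j => pderiv j f)

/-- dimension of the degree `m` piece of the Milnor algebra `M(f) = S/J_f`. -/
def milnorDim (n : ℕ) (f : MvPolynomial (Fin (n + 1)) ℂ) (m : ℕ) : ℕ :=
  Module.finrank ℂ
    (Submodule.map (Ideal.Quotient.mkₐ ℂ (jacobianIdeal n f)).toLinearMap
      (homogeneousSubmodule (Fin (n + 1)) ℂ m))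

open Finset Filter fwdDiff

section GradedPieces
variable {σ R : Type*} [CommSemiring R]

theorem MvPolynomial.homogeneousComponent_mul_of_isHomogeneous {p q : MvPolynomial σ R} {i n : ℕ}
    (hq : q.IsHomogeneous i) (hin : i ≤ n) :
    homogeneousComponent n (p * q) = homogeneousComponent (n - i) p * q := by
  let _ := gradedAlgebra (σ := σ) (R := R)
  have := DirectSum.coe_decompose_mul_of_right_mem_of_le (homogeneousSubmodule σ R) (a := p) hq hin
  rw [← decomposition.decompose'_apply, ← decomposition.decompose'_apply]
  exact this

theorem MvPolynomial.sum_homogeneousComponent_mul_eq {ι : Type*} (s : Finset ι)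
    {q g : ι → MvPolynomial σ R} {a e : ι → ℕ} {n : ℕ} (hg : ∀ i, (g i).IsHomogeneous (e i))
    (hae : ∀ i, a i + e i = n) {x : MvPolynomial σ R} (hx : x.IsHomogeneous n)
    (h : ∑ i ∈ s, q i * g i = x) : ∑ i ∈ s, homogeneousComponent (a i) (q i) * g i = x := by
  rw [← homogeneousComponent_eq_self hx, ← h, map_sum]
  refine sum_congr rfl fun i _ => ?_
  rw [homogeneousComponent_mul_of_isHomogeneous (hg i) (by rw [← hae i]; exact le_add_self),
    ← hae i, Nat.add_sub_cancel]

theorem MvPolynomial.finrank_homogeneousSubmodule [Fintype σ] [Nontrivial R] (n : ℕ) :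
    Module.finrank R (homogeneousSubmodule σ R n) = (Fintype.card σ + n - 1).choose n := by
  classical
  have hsupp : {d : σ →₀ ℕ | d.degree = n} = (univ.finsuppAntidiag n : Finset (σ →₀ ℕ)) := by
    ext d
    simp [mem_finsuppAntidiag, Finsupp.degree_eq_sum]
  have hV := homogeneousSubmodule_eq_finsupp_supported σ R n
  rw [hsupp] at hV
  rw [Module.finrank_eq_card_basis
      ((basisRestrictSupport R _).map (LinearEquiv.ofEq _ _ hV.symm))]
  simpa using card_finsuppAntidiag_nat_eq_choose (s := (univ : Finset σ)) n

instance MvPolynomial.finite_homogeneousSubmodule [Finite σ] (n : ℕ) :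
    Module.Finite R (homogeneousSubmodule σ R n) :=
  Module.Finite.iff_fg.mpr (homogeneousSubmodule_fg σ R n)

local notation "V" => homogeneousSubmodule σ R

theorem MvPolynomial.IsHomogeneous.mul_mem_homogeneousSubmodule {g : MvPolynomial σ R}
    {a e c : ℕ} (hg : g.IsHomogeneous e) (h : a + e = c) : ∀ p ∈ V a, p * g ∈ V c :=
  fun _ hp => h ▸ IsHomogeneous.mul hp hg

def gradedMulRight (g : MvPolynomial σ R) {a c : ℕ} (h : ∀ p ∈ V a, p * g ∈ V c) :
    V a →ₗ[R] V c :=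
  (LinearMap.mulRight R g).restrict h

def gradedLinComb {ι : Type*} [Fintype ι] (g : ι → MvPolynomial σ R) {a : ι → ℕ} {c : ℕ}
    (h : ∀ i, ∀ p ∈ V (a i), p * g i ∈ V c) : (∀ i, V (a i)) →ₗ[R] V c :=
  ∑ i, gradedMulRight (g i) (h i) ∘ₗ LinearMap.proj i

@[simp]
theorem coe_gradedMulRight_apply (g : MvPolynomial σ R) {a c : ℕ} (h : ∀ p ∈ V a, p * g ∈ V c)
    (p : V a) : (gradedMulRight g h p : MvPolynomial σ R) = p * g :=
  rfl

@[simp]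
theorem coe_gradedLinComb_apply {ι : Type*} [Fintype ι] (g : ι → MvPolynomial σ R) {a : ι → ℕ}
    {c : ℕ} (h : ∀ i, ∀ p ∈ V (a i), p * g i ∈ V c) (x : ∀ i, V (a i)) :
    (gradedLinComb g h x : MvPolynomial σ R) = ∑ i, (x i : MvPolynomial σ R) * g i := by
  simp [gradedLinComb]

end GradedPieces

theorem Submodule.mem_span_image_ne_of_isUnit {R M ι : Type*} [CommRing R] [AddCommGroup M]
    [Module R M] [Fintype ι] {b : ι → R} {v : ι → M}
    (hrel : ∑ i, b i • v i = 0) {i : ι} (hi : IsUnit (b i)) :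
    v i ∈ span R (v '' {j | j ≠ i}) := by
  classical
  rw [← add_sum_erase _ _ (mem_univ i), add_eq_zero_iff_eq_neg] at hrel
  obtain ⟨u, hu⟩ := hi
  rw [← inv_smul_smul u (v i), Units.smul_def u (v i), hu, hrel]
  refine smul_of_tower_mem _ _ (neg_mem (sum_mem fun j hj => smul_mem _ _ (subset_span ?_)))
  exact ⟨j, ne_of_mem_erase hj, rfl⟩

theorem MvPolynomial.IsHomogeneous.isUnit_of_ne_zero {σ K : Type*} [Field K]
    {p : MvPolynomial σ K} (hp : p.IsHomogeneous 0) (hp0 : p ≠ 0) : IsUnit p := by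
  have hC := totalDegree_eq_zero_iff_eq_C.mp (hp.totalDegree hp0)
  refine isUnit_iff_eq_C_of_isReduced.mpr ⟨_, isUnit_iff_ne_zero.mpr fun h => hp0 ?_, hC⟩
  rw [hC, h, map_zero]

theorem lt_of_ne_zero_of_notMem_span {σ K κ ι : Type*} [Field K] [Fintype ι]
    {ρ : ι → κ → MvPolynomial σ K} {dd : ι → ℕ} {b : ι → MvPolynomial σ K} {r : ℕ}
    (hb : ∀ i, (b i).IsHomogeneous (r - dd i)) (hrel : ∀ j, ∑ i, b i * ρ i j = 0)
    (hmin : ∀ i, ρ i ∉ Submodule.span (MvPolynomial σ K) (ρ '' {j | j ≠ i})) {i : ι}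
    (hbi : b i ≠ 0) : dd i < r := by
  by_contra! hri
  refine hmin i (Submodule.mem_span_image_ne_of_isUnit (b := b) ?_ ?_)
  · funext j
    simpa using hrel j
  · exact (Nat.sub_eq_zero_of_le hri ▸ hb i).isUnit_of_ne_zero hbi

theorem finrank_range_add_finrank_add_finrank_of_exact {K A B C D E : Type*} [Field K]
    [AddCommGroup A] [Module K A] [AddCommGroup B] [Module K B] [FiniteDimensional K B]
    [AddCommGroup C] [Module K C] [FiniteDimensional K C] [AddCommGroup D] [Module K D]
    [FiniteDimensional K D] [AddCommGroup E] [Module K E]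
    {θ : A →ₗ[K] B} {ψ : B →ₗ[K] C} {φ : C →ₗ[K] D} {π : D →ₗ[K] E} (hθ : Function.Injective θ)
    (hθψ : Function.Exact θ ψ) (hψφ : Function.Exact ψ φ) (hφπ : Function.Exact φ π) :
    Module.finrank K (LinearMap.range π) + Module.finrank K C + Module.finrank K A =
      Module.finrank K D + Module.finrank K B := by
  have hπ := π.finrank_range_add_finrank_ker
  have hφ := φ.finrank_range_add_finrank_ker
  have hψ := ψ.finrank_range_add_finrank_ker
  rw [LinearMap.exact_iff.mp hφπ] at hπ
  rw [LinearMap.exact_iff.mp hψφ] at hφ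
  rw [LinearMap.exact_iff.mp hθψ, LinearMap.finrank_range_of_inj hθ] at hψ
  omega

section Resolution
variable {σ K : Type*} [Field K] {κ ι : Type*}

local notation "V" => homogeneousSubmodule σ K

variable {g : κ → MvPolynomial σ K} {δ : ℕ} {ρ : ι → κ → MvPolynomial σ K} {dd : ι → ℕ}
  {b : ι → MvPolynomial σ K} {r k : ℕ}

variable (g) in
def quotientHom (m : ℕ) : V m →ₗ[K] MvPolynomial σ K ⧸ Ideal.span (Set.range g) :=
  (Ideal.Quotient.mkₐ K _).toLinearMap ∘ₗ (V m).subtype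

variable (k) in
def linCombHom [Fintype κ] (hg : ∀ j, (g j).IsHomogeneous δ) : (κ → V k) →ₗ[K] V (k + δ) :=
  gradedLinComb g fun j => (hg j).mul_mem_homogeneousSubmodule rfl

def syzygyHom [Fintype ι] (hρ : ∀ i j, (ρ i j).IsHomogeneous (dd i)) (hk : ∀ i, dd i ≤ k) :
    (∀ i, V (k - dd i)) →ₗ[K] (κ → V k) :=
  LinearMap.pi fun j => gradedLinComb (fun i => ρ i j) fun i =>
    (hρ i j).mul_mem_homogeneousSubmodule (Nat.sub_add_cancel (hk i))

theorem relation_mul_mem (hb : ∀ i, (b i).IsHomogeneous (r - dd i))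
    (hbr : ∀ i, b i ≠ 0 → dd i ≤ r) (hrk : r ≤ k) (i : ι) :
    ∀ p ∈ V (k - r), p * b i ∈ V (k - dd i) := by
  by_cases hbi : b i = 0
  · simp [hbi]
  · exact (hb i).mul_mem_homogeneousSubmodule (by have := hbr i hbi; omega)

def relationHom (hb : ∀ i, (b i).IsHomogeneous (r - dd i)) (hbr : ∀ i, b i ≠ 0 → dd i ≤ r)
    (hrk : r ≤ k) : V (k - r) →ₗ[K] (∀ i, V (k - dd i)) :=
  LinearMap.pi fun i => gradedMulRight (b i) (relation_mul_mem hb hbr hrk i)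

theorem exact_linCombHom_quotientHom [Fintype κ] (hg : ∀ j, (g j).IsHomogeneous δ) :
    Function.Exact (linCombHom k hg) (quotientHom g (k + δ)) := by
  intro x
  simp only [quotientHom, LinearMap.comp_apply, Submodule.coe_subtype, AlgHom.toLinearMap_apply,
    Ideal.Quotient.mkₐ_eq_mk, Ideal.Quotient.eq_zero_iff_mem, Ideal.mem_span_range_iff_exists_fun]
  constructor
  · rintro ⟨q, hq⟩
    refine ⟨fun j => ⟨homogeneousComponent k (q j), homogeneousComponent_mem _ _⟩, Subtype.ext ?_⟩
    simpa [linCombHom] using sum_homogeneousComponent_mul_eq univ hg (fun _ => rfl) x.2 hq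
  · rintro ⟨c, rfl⟩
    exact ⟨fun j => c j, by simp [linCombHom]⟩

theorem exact_syzygyHom_linCombHom [Fintype κ] [Fintype ι] (hg : ∀ j, (g j).IsHomogeneous δ)
    (hρ : ∀ i j, (ρ i j).IsHomogeneous (dd i)) (hk : ∀ i, dd i ≤ k)
    (hspan : ∀ c : κ → MvPolynomial σ K,
      ∑ j, c j * g j = 0 ↔ c ∈ Submodule.span (MvPolynomial σ K) (Set.range ρ)) :
    Function.Exact (syzygyHom hρ hk) (linCombHom k hg) := by
  intro c
  have hc : linCombHom k hg c = 0 ↔ ∑ j, (c j : MvPolynomial σ K) * g j = 0 := by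
    simp [← Subtype.coe_inj, linCombHom]
  rw [hc, hspan, Submodule.mem_span_range_iff_exists_fun]
  constructor
  · rintro ⟨q, hq⟩
    refine ⟨fun i => ⟨homogeneousComponent (k - dd i) (q i), homogeneousComponent_mem _ _⟩,
      funext fun j => Subtype.ext ?_⟩
    simpa [syzygyHom] using sum_homogeneousComponent_mul_eq univ (fun i => hρ i j)
      (fun i => Nat.sub_add_cancel (hk i)) (c j).2 (by simpa using congrFun hq j)
  · rintro ⟨p, rfl⟩
    exact ⟨fun i => p i, funext fun j => by simp [syzygyHom]⟩

theorem exact_relationHom_syzygyHom [Fintype ι] (hρ : ∀ i j, (ρ i j).IsHomogeneous (dd i))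
    (hk : ∀ i, dd i ≤ k) (hb : ∀ i, (b i).IsHomogeneous (r - dd i))
    (hbr : ∀ i, b i ≠ 0 → dd i ≤ r) (hrk : r ≤ k) (hrel : ∀ j, ∑ i, b i * ρ i j = 0)
    (hgen : ∀ c : ι → MvPolynomial σ K,
      (∀ j, ∑ i, c i * ρ i j = 0) → ∃ s, ∀ i, c i = s * b i) :
    Function.Exact (relationHom hb hbr hrk) (syzygyHom (κ := κ) hρ hk) := by
  intro c
  have hc : syzygyHom hρ hk c = 0 ↔ ∀ j, ∑ i, (c i : MvPolynomial σ K) * ρ i j = 0 := by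
    simp [funext_iff, ← Subtype.coe_inj, syzygyHom]
  rw [hc]
  constructor
  · intro hker
    obtain ⟨s, hs⟩ := hgen _ hker
    refine ⟨⟨homogeneousComponent (k - r) s, homogeneousComponent_mem _ _⟩,
      funext fun i => Subtype.ext ?_⟩
    simp only [relationHom, LinearMap.pi_apply, coe_gradedMulRight_apply]
    by_cases hbi : b i = 0
    · simp [hbi, hs i]
    · have := hbr i hbi
      rw [← homogeneousComponent_eq_self (c i).2, hs i,
        homogeneousComponent_mul_of_isHomogeneous (hb i) (by omega),
        show k - dd i - (r - dd i) = k - r by omega]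
  · rintro ⟨s, rfl⟩ j
    simp [relationHom, mul_assoc, ← mul_sum, hrel j]

theorem relationHom_injective (hb : ∀ i, (b i).IsHomogeneous (r - dd i))
    (hbr : ∀ i, b i ≠ 0 → dd i ≤ r) (hrk : r ≤ k) {i₀ : ι} (hb₀ : b i₀ ≠ 0) :
    Function.Injective (relationHom hb hbr hrk) := fun _ _ hst =>
  Subtype.ext (mul_right_cancel₀ hb₀ (congrArg Subtype.val (congrFun hst i₀)))

theorem finrank_map_quotient_add [Fintype σ] [Fintype κ] [Fintype ι]
    (hg : ∀ j, (g j).IsHomogeneous δ) (hρ : ∀ i j, (ρ i j).IsHomogeneous (dd i))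
    (hspan : ∀ c : κ → MvPolynomial σ K,
      ∑ j, c j * g j = 0 ↔ c ∈ Submodule.span (MvPolynomial σ K) (Set.range ρ))
    (hb : ∀ i, (b i).IsHomogeneous (r - dd i)) (hbr : ∀ i, b i ≠ 0 → dd i ≤ r)
    (hrel : ∀ j, ∑ i, b i * ρ i j = 0)
    (hgen : ∀ c : ι → MvPolynomial σ K,
      (∀ j, ∑ i, c i * ρ i j = 0) → ∃ s, ∀ i, c i = s * b i)
    {i₀ : ι} (hb₀ : b i₀ ≠ 0) (hk : ∀ i, dd i ≤ k) (hrk : r ≤ k) :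
    Module.finrank K (Submodule.map (Ideal.Quotient.mkₐ K (Ideal.span (Set.range g))).toLinearMap
        (V (k + δ))) + Fintype.card κ * Module.finrank K (V k) + Module.finrank K (V (k - r)) =
      Module.finrank K (V (k + δ)) + ∑ i, Module.finrank K (V (k - dd i)) := by
  have := finrank_range_add_finrank_add_finrank_of_exact (relationHom_injective hb hbr hrk hb₀)
    (exact_relationHom_syzygyHom hρ hk hb hbr hrk hrel hgen)
    (exact_syzygyHom_linCombHom hg hρ hk hspan) (exact_linCombHom_quotientHom hg)
  rwa [quotientHom, LinearMap.range_comp, Submodule.range_subtype, Module.finrank_pi_fintype,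
    Module.finrank_pi_fintype, sum_const, card_univ, smul_eq_mul] at this

end Resolution

theorem fwdDiff_choose_add {R : Type*} [AddCommGroupWithOne R] (c r : ℕ) :
    Δ_[1] (fun y : ℕ => ((y + c).choose (r + 1) : R)) = fun y => ((y + c).choose r : R) := by
  ext y
  simp only [fwdDiff, show y + 1 + c = y + c + 1 by ring, Nat.choose_succ_succ', Nat.cast_add,
    add_sub_cancel_right]

theorem fwdDiff_iter_choose_add {R : Type*} [AddCommGroupWithOne R] (c j r : ℕ) :
    (Δ_[1])^[j] (fun y : ℕ => ((y + c).choose (j + r) : R)) = fun y => ((y + c).choose r : R) := by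
  induction j generalizing r with
  | zero => simp
  | succ j ih =>
    rw [Function.iterate_succ_apply, show j + 1 + r = j + r + 1 by ring, fwdDiff_choose_add, ih]

theorem fwdDiff_iter_eq_sum_choose {ι R : Type*} [CommRing R] (s : Finset ι) (w : ι → R)
    (c : ι → ℕ) {j r : ℕ} {g : ℕ → R}
    (hg : ∀ y, g y = ∑ t ∈ s, w t * ((y + c t).choose (j + r) : R)) (y : ℕ) :
    (Δ_[1])^[j] g y = ∑ t ∈ s, w t * ((y + c t).choose r : R) := by
  have : g = ∑ t ∈ s, w t • fun y : ℕ => ((y + c t).choose (j + r) : R) := by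
    ext y
    simp [hg]
  simp [this, fwdDiff_iter_finsetSum, fwdDiff_iter_choose_add]

theorem fwdDiff_iter_comp_natCast_add {R G : Type*} [CommSemiring R] [AddCommGroup G] (g : R → G)
    (s j y : ℕ) :
    (Δ_[1])^[j] (fun x : ℕ => g ((x + s : ℕ) : R)) y = (Δ_[1])^[j] g ((y + s : ℕ) : R) := by
  simp only [fwdDiff_iter_eq_sum_shift]
  refine sum_congr rfl fun i _ => ?_
  push_cast
  ring_nf

theorem leadingCoeff_mul_factorial_of_eval_add_eq_sum_choose {ι : Type*} (s : Finset ι)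
    (w : ι → ℚ) (c : ι → ℕ) (P : Polynomial ℚ) (N L : ℕ) (hP : P.natDegree = N)
    (h : ∀ y : ℕ, P.eval ((y + L : ℕ) : ℚ) = ∑ t ∈ s, w t * ((y + c t).choose (N + 2) : ℚ)) :
    ∑ t ∈ s, w t = 0 ∧ ∑ t ∈ s, w t * c t = 0 ∧
      P.leadingCoeff * N.factorial = (∑ t ∈ s, w t * c t ^ 2) / 2 := by
  have hvanish : ∀ y : ℕ, ∑ t ∈ s, w t * (y + c t : ℚ) = 0 := fun y => by
    have := fwdDiff_iter_eq_sum_choose (j := N + 1) (r := 1) s w c h y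
    rw [fwdDiff_iter_comp_natCast_add P.eval,
      Polynomial.fwdDiff_iter_eq_zero_of_degree_lt (by omega)] at this
    simpa using this.symm
  have h0 := hvanish 0
  have h1 := hvanish 1
  simp only [Nat.cast_zero, Nat.cast_one, zero_add, mul_add, sum_add_distrib, mul_one] at h0 h1
  have hw : ∑ t ∈ s, w t = 0 := by linear_combination h1 - h0
  refine ⟨hw, h0, ?_⟩
  have := fwdDiff_iter_eq_sum_choose (j := N) (r := 2) s w c h 0
  rw [fwdDiff_iter_comp_natCast_add P.eval, ← hP, Polynomial.fwdDiff_iter_degree_eq_factorial,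
    hP] at this
  simp only [Pi.smul_apply, Pi.natCast_apply, smul_eq_mul, zero_add, Nat.cast_choose_two] at this
  rw [this, ← sub_zero (∑ t ∈ s, w t * c t ^ 2), ← h0, ← sum_sub_distrib, sum_div]
  exact sum_congr rfl fun t _ => by ring

theorem leadingCoeff_mul_factorial_of_eventually_eval_eq_sum_choose {ι : Type*} (s : Finset ι)
    (w : ι → ℚ) (a : ι → ℕ) (P : Polynomial ℚ) (N : ℕ) (hP : P.natDegree = N)
    (h : ∀ᶠ x : ℕ in atTop,
      P.eval (x : ℚ) = ∑ t ∈ s, w t * ((x - a t + (N + 2)).choose (N + 2) : ℚ)) (u : ℚ) :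
    ∑ t ∈ s, w t * (a t - u) = 0 ∧
      P.leadingCoeff * N.factorial = (∑ t ∈ s, w t * (a t - u) ^ 2) / 2 := by
  obtain ⟨x₀, hx₀⟩ := eventually_atTop.1 h
  set L := x₀ + ∑ t ∈ s, a t
  have ha : ∀ t ∈ s, a t ≤ L := fun t ht => le_add_left (single_le_sum (by simp) ht)
  set c : ι → ℕ := fun t => L - a t + (N + 2)
  obtain ⟨hw, hwc, hlead⟩ := leadingCoeff_mul_factorial_of_eval_add_eq_sum_choose s w c P N L hP
    fun y => by
      rw [hx₀ _ (by omega)]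
      refine sum_congr rfl fun t ht => ?_
      rw [show y + L - a t + (N + 2) = y + c t by simp only [c]; have := ha t ht; omega]
  set M : ℚ := L + (N + 2) - u
  have hc : ∀ t ∈ s, (a t - u : ℚ) = M - c t := fun t ht => by
    simp only [M, c]; push_cast [ha t ht]; ring
  have h₁ : ∑ t ∈ s, w t * (a t - u) = M * ∑ t ∈ s, w t - ∑ t ∈ s, w t * c t := by
    rw [mul_sum, ← sum_sub_distrib]
    exact sum_congr rfl fun t ht => by rw [hc t ht]; ring
  have h₂ : ∑ t ∈ s, w t * (a t - u) ^ 2 =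
      M ^ 2 * ∑ t ∈ s, w t - 2 * M * ∑ t ∈ s, w t * c t + ∑ t ∈ s, w t * c t ^ 2 := by
    rw [mul_sum, mul_sum, ← sum_sub_distrib, ← sum_add_distrib]
    exact sum_congr rfl fun t ht => by rw [hc t ht]; ring
  rw [h₁, h₂, hw, hwc, hlead]
  constructor <;> ring

theorem sq_sum_eq_sum_sq_add_two_mul_sum_lt {ι R : Type*} [Fintype ι] [LinearOrder ι]
    [CommSemiring R] (g : ι → R) :
    (∑ i, g i) ^ 2 =
      ∑ i, g i ^ 2 + 2 * ∑ p ∈ univ.filter (fun p : ι × ι => p.1 < p.2), g p.1 * g p.2 := by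
  have hswap : ∑ p ∈ univ.filter (fun p : ι × ι => p.2 < p.1), g p.1 * g p.2 =
      ∑ p ∈ univ.filter (fun p : ι × ι => p.1 < p.2), g p.1 * g p.2 :=
    sum_equiv (Equiv.prodComm ι ι) (by simp) fun p _ => mul_comm _ _
  have hdiag : ∑ p ∈ univ.filter (fun p : ι × ι => p.1 = p.2), g p.1 * g p.2 = ∑ i, g i ^ 2 := by
    rw [sum_filter, Fintype.sum_prod_type]
    simp [sq]
  have hsplit : ∀ p : ι × ι, g p.1 * g p.2 = (if p.1 < p.2 then g p.1 * g p.2 else 0) +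
      (if p.2 < p.1 then g p.1 * g p.2 else 0) + (if p.1 = p.2 then g p.1 * g p.2 else 0) := by
    intro p
    rcases lt_trichotomy p.1 p.2 with h | h | h
    · simp [h, h.not_gt, h.ne]
    · simp [h]
    · simp [h, h.not_gt, h.ne']
  rw [sq, sum_mul_sum, ← Fintype.sum_prod_type', Fintype.sum_congr _ _ hsplit, sum_add_distrib,
    sum_add_distrib, ← sum_filter, ← sum_filter, ← sum_filter, hswap, hdiag]
  ring

theorem leadingCoeff_mul_factorial_of_resolution (N d K : ℕ) (hd : 1 ≤ d) (dd : Fin (N + 3) → ℕ)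
    (μ : ℕ → ℕ) (hμ : ∀ k, (∀ i, dd i ≤ k) → dd (Fin.last (N + 2)) + 1 ≤ k →
      μ (k + (d - 1)) + (N + 2 + 1) * (k + (N + 2)).choose (N + 2) +
        (k - (dd (Fin.last (N + 2)) + 1) + (N + 2)).choose (N + 2) =
      (k + (d - 1) + (N + 2)).choose (N + 2) + ∑ i, (k - dd i + (N + 2)).choose (N + 2))
    (P : Polynomial ℚ) (hP : ∀ k ≥ K, P.eval (k : ℚ) = μ k) (hdim : P.natDegree = N) :
    P.leadingCoeff * N.factorial =
      (∑ j : Fin (N + 2), (dd j.castSucc : ℚ) ^ 2) +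
        (∑ p ∈ univ.filter (fun p : Fin (N + 2) × Fin (N + 2) => p.1 < p.2),
          (dd p.1.castSucc : ℚ) * (dd p.2.castSucc : ℚ)) - ∑ j : Fin (N + 3), (dd j : ℚ) := by
  -- `a t` is the twist of a free module of the resolution and `w t` its signed multiplicity:
  -- `S(-(d-1)-dᵢ)`, then `S`, `S(-(d-1))^{N+3}` and `S(-(d-1)-e-1)` with `e = dd (Fin.last _)`.
  let w : Fin (N + 3) ⊕ Fin 3 → ℚ := Sum.elim (fun _ => 1) ![1, -(N + 3 : ℚ), -1]
  let a : Fin (N + 3) ⊕ Fin 3 → ℕ :=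
    Sum.elim (fun i => dd i + (d - 1)) ![0, d - 1, dd (Fin.last (N + 2)) + 1 + (d - 1)]
  have hHilb : ∀ᶠ x : ℕ in atTop,
      P.eval (x : ℚ) = ∑ t, w t * ((x - a t + (N + 2)).choose (N + 2) : ℚ) := by
    filter_upwards [eventually_ge_atTop (K + ∑ i, dd i + d)] with x hx
    obtain ⟨k, rfl⟩ : ∃ k, x = k + (d - 1) := ⟨x - (d - 1), by omega⟩
    have hdd : ∀ i, dd i ≤ ∑ j, dd j :=
      fun i => single_le_sum (fun j _ => Nat.zero_le _) (mem_univ i)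
    have := congrArg (Nat.cast : ℕ → ℚ)
      (hμ k (fun i => by have := hdd i; omega) (by have := hdd (Fin.last _); omega))
    push_cast at this
    rw [hP _ (by omega)]
    simp [w, a, Fintype.sum_sum_type, Fin.sum_univ_three, Nat.add_sub_add_right]
    linarith
  obtain ⟨h₁, h₂⟩ :=
    leadingCoeff_mul_factorial_of_eventually_eval_eq_sum_choose univ w a P N hdim hHilb (d - 1)
  simp [w, a, Fintype.sum_sum_type, Fin.sum_univ_three, Nat.cast_sub hd] at h₁ h₂
  rw [Fin.sum_univ_castSucc (fun i => (dd i : ℚ))] at h₁ ⊢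
  rw [Fin.sum_univ_castSucc (fun i => (dd i : ℚ) ^ 2)] at h₂
  have hsq := sq_sum_eq_sum_sq_add_two_mul_sum_lt (fun j : Fin (N + 2) => (dd j.castSucc : ℚ))
  set D := ∑ j : Fin (N + 2), (dd j.castSucc : ℚ)
  rw [h₂]
  linear_combination (1 / 2 : ℚ) * hsq - (1 / 2 : ℚ) * (D + d - 2) * h₁

theorem finrank_homogeneousSubmodule_fin (K : Type*) [Field K] (n m : ℕ) :
    Module.finrank K (homogeneousSubmodule (Fin (n + 1)) K m) = (m + n).choose n := by
  rw [finrank_homogeneousSubmodule, Fintype.card_fin, show n + 1 + m - 1 = m + n by omega,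
    Nat.choose_symm_add]

theorem milnorDim_add_choose {n d : ℕ} {f : MvPolynomial (Fin (n + 1)) ℂ} (hf : f.IsHomogeneous d)
    {dd : Fin (n + 1) → ℕ} {ρs : Fin (n + 1) → (Fin (n + 1) → MvPolynomial (Fin (n + 1)) ℂ)}
    (hhom : ∀ i k, (ρs i k).IsHomogeneous (dd i))
    (hspan : ∀ ρ : Fin (n + 1) → MvPolynomial (Fin (n + 1)) ℂ,
      IsJacobianSyzygy n f ρ ↔ ρ ∈ Submodule.span (MvPolynomial (Fin (n + 1)) ℂ) (Set.range ρs))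
    (hmin : ∀ i, ρs i ∉ Submodule.span (MvPolynomial (Fin (n + 1)) ℂ) (ρs '' {j | j ≠ i}))
    {b : Fin (n + 1) → MvPolynomial (Fin (n + 1)) ℂ} (hbrel : ∀ k, ∑ j, b j * ρs j k = 0)
    (hbhom : ∀ j, b j = 0 ∨ (b j).IsHomogeneous (dd (Fin.last n) + 1 - dd j))
    (hℓ : b (Fin.last n) ≠ 0)
    (hgen : ∀ c : Fin (n + 1) → MvPolynomial (Fin (n + 1)) ℂ,
      (∀ k, ∑ j, c j * ρs j k = 0) → ∃ s : MvPolynomial (Fin (n + 1)) ℂ, ∀ j, c j = s * b j)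
    {k : ℕ} (hk : ∀ i, dd i ≤ k) (hrk : dd (Fin.last n) + 1 ≤ k) :
    milnorDim n f (k + (d - 1)) + (n + 1) * (k + n).choose n +
        (k - (dd (Fin.last n) + 1) + n).choose n =
      (k + (d - 1) + n).choose n + ∑ i, (k - dd i + n).choose n := by
  have hb : ∀ i, (b i).IsHomogeneous (dd (Fin.last n) + 1 - dd i) :=
    fun i => (hbhom i).elim (fun h => h ▸ isHomogeneous_zero _ _ _) id
  have := finrank_map_quotient_add (fun j => hf.pderiv (i := j)) hhom hspan hb
    (fun i hbi => (lt_of_ne_zero_of_notMem_span hb hbrel hmin hbi).le) hbrel hgen hℓ hk hrk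
  simp only [finrank_homogeneousSubmodule_fin, Fintype.card_fin] at this
  exact this

theorem stmt_13_general (n d : ℕ) (hn : 2 ≤ n)
    (f : MvPolynomial (Fin (n + 1)) ℂ) (hd : 3 ≤ d)
    (hf : f.IsHomogeneous d)
    (dd : Fin (n + 1) → ℕ)
    (ρs : Fin (n + 1) → (Fin (n + 1) → MvPolynomial (Fin (n + 1)) ℂ))
    (hhom : ∀ i k, (ρs i k).IsHomogeneous (dd i))
    (hspan : ∀ ρ : Fin (n + 1) → MvPolynomial (Fin (n + 1)) ℂ,
      IsJacobianSyzygy n f ρ ↔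
        ρ ∈ Submodule.span (MvPolynomial (Fin (n + 1)) ℂ) (Set.range ρs))
    (hmin : ∀ i, ρs i ∉
      Submodule.span (MvPolynomial (Fin (n + 1)) ℂ) (ρs '' {j | j ≠ i}))
    (b : Fin (n + 1) → MvPolynomial (Fin (n + 1)) ℂ)
    (hbrel : ∀ k, ∑ j, b j * ρs j k = 0)
    (hbhom : ∀ j, b j = 0 ∨ (b j).IsHomogeneous (dd (Fin.last n) + 1 - dd j))
    (hℓ : b (Fin.last n) ≠ 0)
    (hgen : ∀ c : Fin (n + 1) → MvPolynomial (Fin (n + 1)) ℂ,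
      (∀ k, ∑ j, c j * ρs j k = 0) →
        ∃ s : MvPolynomial (Fin (n + 1)) ℂ, ∀ j, c j = s * b j)
    (P : Polynomial ℚ) (K : ℕ)
    (hP : ∀ k ≥ K, P.eval (k : ℚ) = milnorDim n f k)
    (hdim : P.natDegree = n - 2) :
    P.leadingCoeff * (Nat.factorial (n - 2)) =
      (∑ j : Fin n, (dd j.castSucc : ℚ) ^ 2) +
        (∑ p ∈ Finset.univ.filter (fun p : Fin n × Fin n => p.1 < p.2),
          (dd p.1.castSucc : ℚ) * (dd p.2.castSucc : ℚ)) -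
        ∑ j : Fin (n + 1), (dd j : ℚ) := by
  obtain ⟨N, rfl⟩ : ∃ N, n = N + 2 := ⟨n - 2, by omega⟩
  rw [Nat.add_sub_cancel] at hdim ⊢
  exact leadingCoeff_mul_factorial_of_resolution N d K (by omega) dd (milnorDim (N + 2) f)
    (fun k hk hrk => milnorDim_add_choose hf hhom hspan hmin hbrel hbhom hℓ hgen hk hrk) P hP hdim

/-- If `V : f = 0` is a strictly POG hypersurface in `ℙⁿ` with exponents
`(d_1,...,d_{n+1})` and the singular subscheme `Σ` has dimension `n-2` (i.e. the
Hilbert polynomial `P` of `M(f)` has degree `n-2`), then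
`deg Σ = P.leadingCoeff·(n-2)! = ∑_{j≤n} d_j² + ∑_{1≤i<j≤n} d_i d_j − ∑_{j≤n+1} d_j`. -/
theorem stmt_13 (n d : ℕ) (hn : 2 ≤ n)
    (f : MvPolynomial (Fin (n + 1)) ℂ) (hd : 3 ≤ d)
    (hf : f.IsHomogeneous d) (hred : Squarefree f)
    (dd : Fin (n + 1) → ℕ)
    (ρs : Fin (n + 1) → (Fin (n + 1) → MvPolynomial (Fin (n + 1)) ℂ))
    (hsyz : ∀ i, IsJacobianSyzygy n f (ρs i))
    (hhom : ∀ i k, (ρs i k).IsHomogeneous (dd i))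
    (hspan : ∀ ρ : Fin (n + 1) → MvPolynomial (Fin (n + 1)) ℂ,
      IsJacobianSyzygy n f ρ ↔
        ρ ∈ Submodule.span (MvPolynomial (Fin (n + 1)) ℂ) (Set.range ρs))
    (hmin : ∀ i, ρs i ∉
      Submodule.span (MvPolynomial (Fin (n + 1)) ℂ) (ρs '' {j | j ≠ i}))
    (b : Fin (n + 1) → MvPolynomial (Fin (n + 1)) ℂ)
    (hbrel : ∀ k, ∑ j, b j * ρs j k = 0)
    (hbhom : ∀ j, b j = 0 ∨ (b j).IsHomogeneous (dd (Fin.last n) + 1 - dd j))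
    (hℓ : b (Fin.last n) ≠ 0)
    (hℓlin : (b (Fin.last n)).IsHomogeneous 1)
    (hgen : ∀ c : Fin (n + 1) → MvPolynomial (Fin (n + 1)) ℂ,
      (∀ k, ∑ j, c j * ρs j k = 0) →
        ∃ s : MvPolynomial (Fin (n + 1)) ℂ, ∀ j, c j = s * b j)
    (P : Polynomial ℚ) (K : ℕ)
    (hP : ∀ k ≥ K, P.eval (k : ℚ) = milnorDim n f k)
    (hdim : P.natDegree = n - 2) :
    P.leadingCoeff * (Nat.factorial (n - 2)) =
      (∑ j : Fin n, (dd j.castSucc : ℚ) ^ 2) +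
        (∑ p ∈ Finset.univ.filter (fun p : Fin n × Fin n => p.1 < p.2),
          (dd p.1.castSucc : ℚ) * (dd p.2.castSucc : ℚ)) -
        ∑ j : Fin (n + 1), (dd j : ℚ) :=
  stmt_13_general n d hn f hd hf dd ρs hhom hspan hmin b hbrel hbhom hℓ hgen P K hP hdim
end
end

section
/- Let V: f = 0 be a POG hypersurface with respect to (ρ_1,...,ρ_{n+1}) in which the unique generating second-order relation is b_1ρ_1 + ... + b_nρ_n + ℓρ_{n+1} = 0. Suppose ℓ ≠ 0 (strictly POG) and ℓ does not divide b_n. Then for any syzygy ρ = Σ_{j=1}^{n+1} c_jρ_j with v(ρ) = 0 and ℓ not dividing c_{n+1}, one gets c_nℓ = c_{n+1}b_n, a contradiction; hence ker v ⊆ im u and V is tame with respect to ρ̂ = (ρ_1,...,ρ_{n-1}). -/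
open MvPolynomial

noncomputable section

def bmat (n : ℕ)
    (ρ1 : Fin (n - 1) → Fin (n + 1) → MvPolynomial (Fin (n + 1)) ℂ)
    (ρ : Fin (n + 1) → MvPolynomial (Fin (n + 1)) ℂ) :
    Matrix (Fin (n + 1)) (Fin (n + 1)) (MvPolynomial (Fin (n + 1)) ℂ) :=
  Matrix.of fun i j =>
    if h0 : (i : ℕ) = 0 then X j
    else if h1 : (i : ℕ) < n then ρ1 ⟨(i : ℕ) - 1, by omega⟩ j
    else ρ j

def IsTame (n : ℕ) (f : MvPolynomial (Fin (n + 1)) ℂ)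
    (ρ1 : Fin (n - 1) → Fin (n + 1) → MvPolynomial (Fin (n + 1)) ℂ) : Prop :=
  LinearIndependent (MvPolynomial (Fin (n + 1)) ℂ) ρ1 ∧
  ∀ ρ : Fin (n + 1) → MvPolynomial (Fin (n + 1)) ℂ,
    IsJacobianSyzygy n f ρ → (bmat n ρ1 ρ).det = 0 →
      ρ ∈ Submodule.span (MvPolynomial (Fin (n + 1)) ℂ) (Set.range ρ1)

/-! Let `v ρ` be the determinant of the matrix with rows `x, ρ_1, …, ρ_{n-1}, ρ`; it is linear in
`ρ` and kills `ρ_1, …, ρ_{n-1}`. Its value at `ρ_n` is nonzero: against the gradient of `f`,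
Euler's identity sends the row `x` to `d f ≠ 0` and the syzygies to `0`, while `ρ_1, …, ρ_n` are
independent because the only relation has last coefficient `ℓ ≠ 0`. Applying `v` to the relation
`Σ b_j ρ_j = 0` and to a syzygy `ρ = Σ c_j ρ_j` with `v ρ = 0` gives `c_n ℓ = c_{n+1} b_n`. As the
linear form `ℓ` is prime and does not divide `b_n`, `c_{n+1} = t ℓ` and `c_n = t b_n`, so
`ρ - t Σ b_j ρ_j = ρ` is a combination of `ρ_1, …, ρ_{n-1}`. -/

theorem Finset.sum_smul_eq_zero_iff_forall_sum_mul {ι κ R : Type*} [Fintype ι] [Semiring R]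
    (c : ι → R) (ρ : ι → κ → R) :
    ∑ j, c j • ρ j = 0 ↔ ∀ k, ∑ j, c j * ρ j k = 0 := by
  simp [funext_iff, Finset.sum_apply]

theorem MvPolynomial.prime_of_isHomogeneous_one {σ : Type*} {K : Type*} [Field K] [Finite σ]
    {p : MvPolynomial σ K} (h : p.IsHomogeneous 1) (h0 : p ≠ 0) : Prime p := by
  refine (irreducible_of_totalDegree_eq_one (h.totalDegree h0) fun x hx => ?_).prime
  obtain ⟨i, hi⟩ := ne_zero_iff.mp h0
  exact isUnit_iff_ne_zero.mpr (ne_zero_of_dvd_ne_zero hi (hx i))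

theorem Matrix.det_ne_zero_of_mulVec_eq_single {R : Type*} [CommRing R] [IsDomain R] {m : ℕ}
    {A : Matrix (Fin (m + 1)) (Fin (m + 1)) R} {g : Fin (m + 1) → R} {r : R} (hr : r ≠ 0)
    (hg : A.mulVec g = Pi.single 0 r) (hrows : LinearIndependent R fun i : Fin m => A i.succ) :
    A.det ≠ 0 := by
  intro hdet
  obtain ⟨a, ha, haA⟩ := Matrix.exists_vecMul_eq_zero_iff.mpr hdet
  have ha0 : a 0 = 0 := by
    have := Matrix.dotProduct_mulVec a A g
    rw [hg, haA, zero_dotProduct, dotProduct_single] at this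
    exact (mul_eq_zero.mp this).resolve_right hr
  have htail : ∑ i : Fin m, a i.succ • A i.succ = 0 := by
    rwa [Matrix.vecMul_eq_sum, Fin.sum_univ_succ, ha0, zero_smul, zero_add] at haA
  exact ha (funext (Fin.cases ha0 (Fintype.linearIndependent_iff.mp hrows _ htail)))

section Relations

variable {R M ι κ : Type*} [CommRing R] [AddCommGroup M] [Module R M] [Fintype ι]
  {ρ : ι → M} {b : ι → R}

theorem map_sum_smul_eq_of_map_comp_eq_zero (v : M →ₗ[R] R) {p q : ι} (hpq : p ≠ q) {e : κ → ι}
    (hcover : ∀ j, j ≠ p → j ≠ q → j ∈ Set.range e) (hve : ∀ i, v (ρ (e i)) = 0) (c : ι → R) :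
    v (∑ j, c j • ρ j) = c p * v (ρ p) + c q * v (ρ q) := by
  simp only [map_sum, map_smul, smul_eq_mul]
  refine Fintype.sum_eq_add p q hpq fun j ⟨hjp, hjq⟩ => ?_
  obtain ⟨i, rfl⟩ := hcover j hjp hjq
  rw [hve, mul_zero]

variable [IsDomain R]

theorem eq_zero_of_sum_smul_eq_zero_of_apply_eq_zero
    (hgen : ∀ c : ι → R, ∑ j, c j • ρ j = 0 → ∃ s, ∀ j, c j = s * b j) {q : ι} (hbq : b q ≠ 0)
    {c : ι → R} (hc : ∑ j, c j • ρ j = 0) (hcq : c q = 0) : c = 0 := by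
  obtain ⟨s, hs⟩ := hgen c hc
  have hs0 : s = 0 := (mul_eq_zero.mp ((hs q).symm.trans hcq)).resolve_right hbq
  exact funext fun j => by rw [hs j, hs0, zero_mul, Pi.zero_apply]

theorem linearIndependent_comp_of_notMem_range
    (hgen : ∀ c : ι → R, ∑ j, c j • ρ j = 0 → ∃ s, ∀ j, c j = s * b j) {q : ι} (hbq : b q ≠ 0)
    {e : κ → ι} (he : Function.Injective e) (hq : q ∉ Set.range e) :
    LinearIndependent R (ρ ∘ e) := by
  rw [linearIndependent_iff]
  intro l hl
  apply Finsupp.mapDomain_injective he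
  have hrel : ∑ j, l.mapDomain e j • ρ j = 0 := by
    rw [← hl, ← Finsupp.linearCombination_mapDomain, Finsupp.linearCombination_apply,
      Finsupp.sum_fintype _ _ fun i => zero_smul R (ρ i)]
  rw [Finsupp.mapDomain_zero]
  exact DFunLike.coe_injective <| eq_zero_of_sum_smul_eq_zero_of_apply_eq_zero hgen hbq hrel
    (Finsupp.mapDomain_of_notMem_range _ _ hq)

theorem mem_span_comp_of_map_eq_zero (v : M →ₗ[R] R) {p q : ι} (hpq : p ≠ q) {e : κ → ι}
    (hcover : ∀ j, j ≠ p → j ≠ q → j ∈ Set.range e) (hve : ∀ i, v (ρ (e i)) = 0)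
    (hb : ∑ j, b j • ρ j = 0) (hvp : v (ρ p) ≠ 0)
    (hq : Prime (b q)) (hnd : ¬ b q ∣ b p) {x : M} (hx : x ∈ Submodule.span R (Set.range ρ))
    (hvx : v x = 0) : x ∈ Submodule.span R (Set.range (ρ ∘ e)) := by
  obtain ⟨c, rfl⟩ := (Submodule.mem_span_range_iff_exists_fun R).mp hx
  have hcv := (map_sum_smul_eq_of_map_comp_eq_zero v hpq hcover hve c).symm.trans hvx
  have hbv : b p * v (ρ p) + b q * v (ρ q) = 0 := by
    rw [← map_sum_smul_eq_of_map_comp_eq_zero v hpq hcover hve, hb, map_zero]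
  have hkey : c p * b q = c q * b p := by
    have : (c p * b q - c q * b p) * v (ρ p) = 0 := by linear_combination b q * hcv - c q * hbv
    exact sub_eq_zero.mp ((mul_eq_zero.mp this).resolve_right hvp)
  obtain ⟨t, ht⟩ : b q ∣ c q := (hq.dvd_mul.mp ⟨c p, by rw [← hkey, mul_comm]⟩).resolve_right hnd
  have hcp : c p = t * b p :=
    mul_left_cancel₀ hq.ne_zero (by linear_combination hkey + b p * ht)
  have hsub : ∑ j, c j • ρ j = ∑ j, (c j - t * b j) • ρ j := by
    simp only [sub_smul, Finset.sum_sub_distrib, mul_smul, ← Finset.smul_sum, hb, smul_zero,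
      sub_zero]
  rw [hsub]
  refine Submodule.sum_mem _ fun j _ => ?_
  by_cases hjp : j = p
  · simp [hjp, hcp]
  by_cases hjq : j = q
  · simp [hjq, ht, mul_comm]
  obtain ⟨i, rfl⟩ := hcover j hjp hjq
  exact Submodule.smul_mem _ _ (Submodule.subset_span ⟨i, rfl⟩)

end Relations

section JacobianMatrix

variable {n : ℕ}

theorem bmat_comp_castLE (ρs : Fin (n + 1) → Fin (n + 1) → MvPolynomial (Fin (n + 1)) ℂ) :
    bmat n (ρs ∘ Fin.castLE (by omega)) (ρs ⟨n - 1, by omega⟩) =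
      Matrix.of (Fin.cons (fun k => X k) fun i => ρs i.castSucc) := by
  refine Matrix.ext fun i k => Fin.cases ?_ (fun i => ?_) i
  · simp [bmat]
  · have hi := i.isLt
    simp only [bmat, Matrix.of_apply, Fin.val_succ, Fin.cons_succ]
    by_cases h : (i : ℕ) + 1 < n
    · rw [dif_neg (by omega), dif_pos h]
      rfl
    · rw [dif_neg (by omega), dif_neg h]
      congr 1
      exact Fin.ext (by simp; omega)

theorem bmat_eq_updateRow (hn : n ≠ 0)
    (ρ1 : Fin (n - 1) → Fin (n + 1) → MvPolynomial (Fin (n + 1)) ℂ)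
    (ρ ρ' : Fin (n + 1) → MvPolynomial (Fin (n + 1)) ℂ) :
    bmat n ρ1 ρ = (bmat n ρ1 ρ').updateRow (Fin.last n) ρ := by
  refine Matrix.ext fun i j => ?_
  rcases eq_or_ne i (Fin.last n) with rfl | hi
  · simp [bmat, hn]
  · simp [bmat, Matrix.updateRow_ne hi, Fin.val_lt_last hi]

theorem det_bmat_eq_toLinearMap_detRowAlternating (hn : n ≠ 0)
    (ρ1 : Fin (n - 1) → Fin (n + 1) → MvPolynomial (Fin (n + 1)) ℂ)
    (ρ : Fin (n + 1) → MvPolynomial (Fin (n + 1)) ℂ) :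
    (bmat n ρ1 ρ).det =
      Matrix.detRowAlternating.toMultilinearMap.toLinearMap (bmat n ρ1 0) (Fin.last n) ρ := by
  rw [bmat_eq_updateRow hn ρ1 ρ 0]
  rfl

theorem det_bmat_apply_self (ρ1 : Fin (n - 1) → Fin (n + 1) → MvPolynomial (Fin (n + 1)) ℂ)
    (i : Fin (n - 1)) : (bmat n ρ1 (ρ1 i)).det = 0 := by
  have hi := i.isLt
  refine Matrix.det_zero_of_row_eq (i := ⟨i + 1, by omega⟩) (j := Fin.last n)
    (by simp [Fin.ext_iff]; omega) ?_
  funext k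
  simp [bmat, show (i : ℕ) + 1 < n by omega, show n ≠ 0 by omega]

theorem mulVec_pderiv_eq_single {f : MvPolynomial (Fin (n + 1)) ℂ} {d : ℕ}
    (hf : f.IsHomogeneous d) {ρ : Fin n → Fin (n + 1) → MvPolynomial (Fin (n + 1)) ℂ}
    (hρ : ∀ i, IsJacobianSyzygy n f (ρ i)) :
    (Matrix.of (Fin.cons (fun k => X k) ρ)).mulVec (fun k => pderiv k f) =
      Pi.single 0 (d • f) := by
  funext i
  refine Fin.cases ?_ (fun i => ?_) i
  · simpa [Matrix.mulVec, dotProduct] using hf.sum_X_mul_pderiv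
  · simpa [Matrix.mulVec, dotProduct, IsJacobianSyzygy] using hρ i

end JacobianMatrix

/-- Let `V : f = 0` be a POG hypersurface with respect to `(ρ_1,...,ρ_{n+1})`,
with unique generating second order relation `b_1ρ_1 + ... + b_nρ_n + ℓρ_{n+1} = 0`.
If `ℓ ≠ 0` (`V` strictly POG) and `ℓ` does not divide `b_n`, then `V` is tame
with respect to `ρ̂ = (ρ_1,...,ρ_{n-1})`. -/
theorem stmt_14 (n d : ℕ) (hn : 2 ≤ n)
    (f : MvPolynomial (Fin (n + 1)) ℂ) (hd : 3 ≤ d)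
    (hf : f.IsHomogeneous d) (hred : Squarefree f)
    (ρs : Fin (n + 1) → (Fin (n + 1) → MvPolynomial (Fin (n + 1)) ℂ))
    (hsyz : ∀ i, IsJacobianSyzygy n f (ρs i))
    (hspan : ∀ ρ : Fin (n + 1) → MvPolynomial (Fin (n + 1)) ℂ,
      IsJacobianSyzygy n f ρ ↔
        ρ ∈ Submodule.span (MvPolynomial (Fin (n + 1)) ℂ) (Set.range ρs))
    (b : Fin (n + 1) → MvPolynomial (Fin (n + 1)) ℂ)
    (hbrel : ∀ k, ∑ j, b j * ρs j k = 0)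
    (hgen : ∀ c : Fin (n + 1) → MvPolynomial (Fin (n + 1)) ℂ,
      (∀ k, ∑ j, c j * ρs j k = 0) →
        ∃ s : MvPolynomial (Fin (n + 1)) ℂ, ∀ j, c j = s * b j)
    (hℓlin : (b (Fin.last n)).IsHomogeneous 1)
    (hℓ : b (Fin.last n) ≠ 0)
    (hnd : ¬ b (Fin.last n) ∣ b ⟨n - 1, by omega⟩) :
    IsTame n f (fun i : Fin (n - 1) => ρs ⟨i, by omega⟩) := by
  have hrel : ∀ c : Fin (n + 1) → MvPolynomial (Fin (n + 1)) ℂ,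
      ∑ j, c j • ρs j = 0 → ∃ s, ∀ j, c j = s * b j := fun c hc =>
    hgen c ((Finset.sum_smul_eq_zero_iff_forall_sum_mul c ρs).mp hc)
  have hn0 : n ≠ 0 := by omega
  have hle : n - 1 ≤ n + 1 := by omega
  have hlast : Fin.last n ∉ Set.range (Fin.castLE hle) := by
    rintro ⟨i, hi⟩
    simp [Fin.ext_iff] at hi
    omega
  refine ⟨linearIndependent_comp_of_notMem_range hrel hℓ (Fin.castLE_injective hle) hlast,
    fun ρ hρ hdet => ?_⟩
  have hdetρ : (bmat n (ρs ∘ Fin.castLE hle) (ρs ⟨n - 1, by omega⟩)).det ≠ 0 := by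
    rw [bmat_comp_castLE]
    refine Matrix.det_ne_zero_of_mulVec_eq_single (smul_ne_zero (by omega : d ≠ 0) hred.ne_zero)
      (mulVec_pderiv_eq_single hf fun i => hsyz _) ?_
    exact linearIndependent_comp_of_notMem_range hrel hℓ (Fin.castSucc_injective n) (by simp)
  simp only [det_bmat_eq_toLinearMap_detRowAlternating hn0] at hdetρ hdet
  refine mem_span_comp_of_map_eq_zero _ (p := ⟨n - 1, by omega⟩) (q := Fin.last n)
    (by simp [Fin.ext_iff]; omega) (fun j hjp hjq => ?_) (fun i => ?_)
    ((Finset.sum_smul_eq_zero_iff_forall_sum_mul b ρs).mpr hbrel) hdetρ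
    (MvPolynomial.prime_of_isHomogeneous_one hℓlin hℓ) hnd ((hspan ρ).mp hρ) hdet
  · have : (j : ℕ) < n - 1 := by simp [Fin.ext_iff] at hjp hjq; omega
    exact ⟨⟨j, this⟩, rfl⟩
  · rw [← det_bmat_eq_toLinearMap_detRowAlternating hn0]
    exact det_bmat_apply_self _ i
end
end
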